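/- Let G = (V, E, s, r) be a countable directed graph, (Q, T) a TCK family for G on a complex Hilbert space H, v ∈ V, and ζ ∈ H a unit vector with Q_v ζ = ζ and T_e* ζ = 0 for every e ∈ r⁻¹(v). Let M be the closed linear span of {T_λ ζ : λ a finite path in G with s(λ) = v}. Then M is invariant under every Q_w, T_e and their adjoints (M is reducing), and there is a unitary U : H_{G,v} → M with U ξ_λ = T_λ ζ for every finite path λ with s(λ) = v, which intertwines the model family with the restriction: U P^v_w = Q_w U and U S^v_e = T_e U for every w ∈ V and e ∈ E (viewing Q_w, T_e as operators on M). -/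

import Mathlib

noncomputable section

open scoped ENNReal InnerProductSpace ComplexOrder
open ContinuousLinearMap

attribute [local instance] Classical.propDecidable

namespace GraphPaper

/-! ### Positivity of operators (without completeness assumptions) -/

/-- A bounded operator on a complex inner product space is positive if all the
inner products `⟪T x, x⟫` are nonnegative (this forces them to be real). -/
def IsPosOp {W : Type*} [NormedAddCommGroup W] [InnerProductSpace ℂ W]
    (T : W →L[ℂ] W) : Prop :=
  ∀ x : W, 0 ≤ (inner ℂ (T x) x : ℂ)

/-! ### Toeplitz-Cuntz-Krieger families -/

variable {V E : Type*}

variable {H : Type*} [NormedAddCommGroup H] [InnerProductSpace ℂ H] [CompleteSpace H]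

/-- The Toeplitz-Cuntz-Krieger relations for a family of projections `P` indexed by
vertices and partial isometries `S` indexed by edges. -/
def IsTCK (s r : E → V) (P : V → H →L[ℂ] H) (S : E → H →L[ℂ] H) : Prop :=
  (∀ v, adjoint (P v) = P v) ∧
  (∀ v, P v ∘L P v = P v) ∧
  (∀ v w, v ≠ w → P v ∘L P w = 0) ∧
  (∀ e, adjoint (S e) ∘L S e = P (s e)) ∧
  (∀ (v : V) (F : Finset E), (∀ e ∈ F, r e = v) →
    IsPosOp (P v - ∑ e ∈ F, S e ∘L adjoint (S e)))

/-- A TCK family is a full Cuntz-Krieger family if for every vertex `v` receiving at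
least one edge, the (unconditionally convergent) sum `∑_{r(e) = v} S_e S_e* x` is `P_v x`. -/
def IsFullCK (s r : E → V) (P : V → H →L[ℂ] H) (S : E → H →L[ℂ] H) : Prop :=
  ∀ v : V, (∃ e, r e = v) → ∀ x : H,
    HasSum (fun e : {e : E // r e = v} => S e.1 (adjoint (S e.1) x)) (P v x)

/-- A TCK family is a Cuntz-Krieger family if `∑_{r(e) = v} S_e S_e* = P_v` for every
vertex `v` receiving finitely many and at least one edge. -/
def IsCK (s r : E → V) (P : V → H →L[ℂ] H) (S : E → H →L[ℂ] H) : Prop :=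
  IsTCK s r P S ∧
  ∀ (v : V) (hfin : {e : E | r e = v}.Finite), hfin.toFinset.Nonempty →
    ∑ e ∈ hfin.toFinset, S e ∘L adjoint (S e) = P v

/-- The generators of a TCK family, indexed by vertices and edges. -/
def gen (P : V → H →L[ℂ] H) (S : E → H →L[ℂ] H) : V ⊕ E → H →L[ℂ] H :=
  Sum.elim P S

variable {K : Type*} [NormedAddCommGroup K] [InnerProductSpace ℂ K] [CompleteSpace K]

/-- `(Q, T)` on `K` dilates `(P, S)` on `H` via the isometry `W : H → K`:
compressions of arbitrary nonempty words in the generators agree. -/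
def Dilates (P : V → H →L[ℂ] H) (S : E → H →L[ℂ] H)
    (Q : V → K →L[ℂ] K) (T : E → K →L[ℂ] K) (W : H →L[ℂ] K) : Prop :=
  (∀ x : H, ‖W x‖ = ‖x‖) ∧
  ∀ l : List (V ⊕ E), l ≠ [] →
    adjoint W ∘L (l.map (gen Q T)).prod ∘L W = (l.map (gen P S)).prod

/-! ### Finite paths -/

/-- A finite path `λ = e_n ⋯ e_1` in the directed graph determined by the source and
range maps `s r : E → V`, together with a base vertex `src` which is the source of the
path.  The edges are listed as `[e_n, …, e_1]`, with the consecutive compatibility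
`s (e_{i+1}) = r (e_i)`, and (when the path is nonempty) `s (e_1) = src`.
A path with no edges is the length-zero path at the vertex `src`. -/
structure GPath (s r : E → V) : Type _ where
  src : V
  edges : List E
  chain : edges.Chain' fun e f => s e = r f
  src_eq : ∀ e ∈ edges.getLast?, s e = src

variable {s r : E → V}

/-- The range of a finite path. -/
def GPath.rng (p : GPath s r) : V := ((p.edges.head?).map r).getD p.src

theorem GPath.ext' {p q : GPath s r} (h1 : p.src = q.src) (h2 : p.edges = q.edges) :
    p = q := by
  cases p; cases q; simp_all

/-- The length-zero path at a vertex. -/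
def GPath.nil (s r : E → V) (v : V) : GPath s r where
  src := v
  edges := []
  chain := List.IsChain.nil
  src_eq := by simp

/-- The tail of a path (removing the first, i.e. last-applied, edge). -/
def GPath.tail (p : GPath s r) : GPath s r where
  src := p.src
  edges := p.edges.tail
  chain := p.chain.tail
  src_eq := by
    intro f hf
    apply p.src_eq
    rcases hp : p.edges with - | ⟨a, t⟩
    · rw [hp] at hf; simp at hf
    · rw [hp] at hf
      rcases t with - | ⟨b, t'⟩
      · simp at hf
      · simpa [List.getLast?_cons_cons] using hf

/-- The operator `T_λ = T_{e_n} ⋯ T_{e_1}` associated to a finite path `λ`;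
for the length-zero path at `v` it is `P_v`. -/
def pathOp (P : V → H →L[ℂ] H) (S : E → H →L[ℂ] H) (p : GPath s r) : H →L[ℂ] H :=
  if p.edges.isEmpty then P p.src else (p.edges.map S).prod

/-- Paths with source `v`. -/
abbrev SPath (s r : E → V) (v : V) : Type _ := {p : GPath s r // p.src = v}

/-! ### The model space and the model TCK family -/

/-- The model Hilbert space `H_{G,v} = ℓ²` of the set of paths with source `v`. -/
abbrev HGv (s r : E → V) (v : V) : Type _ := lp (fun _ : SPath s r v => ℂ) 2

/-- The basis vector `ξ_λ` of the model space. -/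
def xi {v : V} (p : SPath s r v) : HGv s r v := lp.single 2 p 1

/-- Pulling back a function `x : ι → ℂ` along a partially defined map `f`. -/
def pullFun {ι κ : Type*} (f : κ → Option ι) (x : ι → ℂ) (k : κ) : ℂ :=
  ((f k).map x).getD 0

theorem pullFun_core {ι κ : Type*} (f : κ → Option ι)
    (hf : ∀ ⦃k k' : κ⦄ ⦃i : ι⦄, f k = some i → f k' = some i → k = k')
    (x : lp (fun _ : ι => ℂ) 2) :
    Memℓp (pullFun f ⇑x) 2 ∧
      ∑' k : κ, ‖pullFun f ⇑x k‖ ^ (2 : ℝ) ≤ ∑' i : ι, ‖x i‖ ^ (2 : ℝ) := by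
  classical
  have hp : 0 < (2 : ℝ≥0∞).toReal := by norm_num
  have hx : Summable fun i : ι => ‖x i‖ ^ (2 : ℝ) := by
    have := lp.memℓp x
    rw [memℓp_gen_iff hp] at this
    simpa using this
  set σ : Set κ := {k : κ | (f k).isSome} with hσ
  have hmem : ∀ k : σ, ∃ i, f (k : κ) = some i := fun k => Option.isSome_iff_exists.mp k.2
  set h : σ → ι := fun k => (f (k : κ)).get k.2 with hh
  have hfk : ∀ k : σ, f (k : κ) = some (h k) := fun k => (Option.some_get k.2).symm
  have hinj : Function.Injective h := by
    intro a b hab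
    have ha := hfk a
    have hb := hfk b
    rw [hab] at ha
    exact Subtype.ext (hf ha hb)
  have hval : ∀ k : σ, pullFun f ⇑x (k : κ) = x (h k) := by
    intro k
    simp [pullFun, hfk k]
  set g : κ → ℝ := fun k => ‖pullFun f ⇑x k‖ ^ (2 : ℝ) with hg
  have hsupp : Function.support g ⊆ σ := by
    intro k hk
    by_contra hks
    have : f k = none := by
      rw [hσ] at hks
      simpa [Option.isNone_iff_eq_none, Option.not_isSome_iff_eq_none] using hks
    apply hk
    simp [hg, pullFun, this, Real.zero_rpow (by norm_num : (2:ℝ) ≠ 0)]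
  have hcomp : (g ∘ (Subtype.val : σ → κ)) = (fun i => ‖x i‖ ^ (2 : ℝ)) ∘ h := by
    funext k
    simp [hg, Function.comp, hval k]
  have hsummσ : Summable (g ∘ (Subtype.val : σ → κ)) := by
    rw [hcomp]; exact hx.comp_injective hinj
  have hsumm : Summable g := by
    obtain ⟨a, ha⟩ := hsummσ
    exact ⟨a, (hasSum_subtype_iff_of_support_subset hsupp).mp ha⟩
  constructor
  · apply memℓp_gen
    have : (fun k => ‖pullFun f ⇑x k‖ ^ (2 : ℝ≥0∞).toReal) = g := by
      funext k; simp [hg]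
    rw [this]
    exact hsumm
  · have h1 : ∑' k : κ, g k = ∑' k : σ, g k := (tsum_subtype_eq_of_support_subset hsupp).symm
    have h2 : ∑' k : σ, g k ≤ ∑' i : ι, ‖x i‖ ^ (2 : ℝ) := by
      have := tsum_comp_le_tsum_of_inj hx
        (fun i => Real.rpow_nonneg (norm_nonneg _) _) hinj
      calc ∑' k : σ, g k = ∑' k : σ, ((fun i => ‖x i‖ ^ (2 : ℝ)) ∘ h) k := by
            rw [← hcomp]; rfl
        _ ≤ ∑' i : ι, ‖x i‖ ^ (2 : ℝ) := this
    exact h1.trans_le h2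

/-- The bounded operator `lp² ι → lp² κ` induced by a partially defined injection. -/
def pullCLM {ι κ : Type*} (f : κ → Option ι)
    (hf : ∀ ⦃k k' : κ⦄ ⦃i : ι⦄, f k = some i → f k' = some i → k = k') :
    lp (fun _ : ι => ℂ) 2 →L[ℂ] lp (fun _ : κ => ℂ) 2 :=
  LinearMap.mkContinuous
    { toFun := fun x => ⟨pullFun f ⇑x, (pullFun_core f hf x).1⟩
      map_add' := by
        intro x y
        apply lp.ext
        funext k
        show pullFun f ⇑(x + y) k = pullFun f ⇑x k + pullFun f ⇑y k
        rw [lp.coeFn_add]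
        unfold pullFun
        cases f k <;> simp
      map_smul' := by
        intro c x
        apply lp.ext
        funext k
        show pullFun f ⇑(c • x) k = c • pullFun f ⇑x k
        rw [lp.coeFn_smul]
        unfold pullFun
        cases f k <;> simp }
    1
    (by
      intro x
      have hp : 0 < (2 : ℝ≥0∞).toReal := by norm_num
      rw [one_mul]
      set y : lp (fun _ : κ => ℂ) 2 := ⟨pullFun f ⇑x, (pullFun_core f hf x).1⟩ with hy
      show ‖y‖ ≤ ‖x‖
      have hle := (pullFun_core f hf x).2
      have h1 : ‖y‖ ^ (2:ℝ) = ∑' k : κ, ‖pullFun f ⇑x k‖ ^ (2 : ℝ) := by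
        simpa using lp.norm_rpow_eq_tsum hp y
      have h2 : ‖x‖ ^ (2:ℝ) = ∑' i : ι, ‖x i‖ ^ (2 : ℝ) := by
        simpa using lp.norm_rpow_eq_tsum hp x
      have key : ‖y‖ ^ (2:ℝ) ≤ ‖x‖ ^ (2:ℝ) := by rw [h1, h2]; exact hle
      have k2 : ‖y‖ ^ (2:ℕ) ≤ ‖x‖ ^ (2:ℕ) := by
        rw [← Real.rpow_natCast ‖y‖ 2, ← Real.rpow_natCast ‖x‖ 2]
        exact_mod_cast key
      have hs := Real.sqrt_le_sqrt k2
      rwa [Real.sqrt_sq (norm_nonneg y), Real.sqrt_sq (norm_nonneg x)] at hs)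

/-- Decoding map for the model projection at `w`. -/
def decodeP (v w : V) (p : SPath s r v) : Option (SPath s r v) :=
  if p.1.rng = w then some p else none

/-- Decoding map for the model partial isometry at `e`. -/
def decodeS (v : V) (e : E) (p : SPath s r v) : Option (SPath s r v) :=
  if p.1.edges.head? = some e then some ⟨p.1.tail, p.2⟩ else none

theorem decodeP_inj (v w : V) :
    ∀ ⦃k k' : SPath s r v⦄ ⦃i : SPath s r v⦄,
      decodeP v w k = some i → decodeP v w k' = some i → k = k' := by
  intro k k' i h1 h2
  unfold decodeP at h1 h2
  split_ifs at h1 h2 <;> simp_all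

theorem decodeS_inj (v : V) (e : E) :
    ∀ ⦃k k' : SPath s r v⦄ ⦃i : SPath s r v⦄,
      decodeS v e k = some i → decodeS v e k' = some i → k = k' := by
  intro k k' i h1 h2
  unfold decodeS at h1 h2
  split_ifs at h1 h2 with he1 he2
  have hi1 := Option.some.inj h1
  have hi2 := Option.some.inj h2
  apply Subtype.ext
  apply GPath.ext'
  · rw [k.2, k'.2]
  · obtain ⟨t1, ht1⟩ := List.head?_eq_some_iff.mp he1
    obtain ⟨t2, ht2⟩ := List.head?_eq_some_iff.mp he2
    have e1 : k.1.tail.edges = t1 := by simp [GPath.tail, ht1]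
    have e2 : k'.1.tail.edges = t2 := by simp [GPath.tail, ht2]
    have : k.1.tail.edges = k'.1.tail.edges := by
      rw [show k.1.tail = i.1 from congrArg Subtype.val hi1,
        show k'.1.tail = i.1 from congrArg Subtype.val hi2]
    rw [ht1, ht2]
    rw [e1, e2] at this
    rw [this]

/-- The model projection `P^v_w` on `H_{G,v}`: the orthogonal projection onto the span
of the basis vectors `ξ_λ` with `r(λ) = w`. -/
def modelP (s r : E → V) (v w : V) : HGv s r v →L[ℂ] HGv s r v :=
  pullCLM (decodeP v w) (decodeP_inj v w)

/-- The model partial isometry `S^v_e` on `H_{G,v}`: it maps `ξ_λ` to `ξ_{eλ}`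
when `s(e) = r(λ)`, and to `0` otherwise. -/
def modelS (s r : E → V) (v : V) (e : E) : HGv s r v →L[ℂ] HGv s r v :=
  pullCLM (decodeS v e) (decodeS_inj v e)

/-! ### Reducing subspaces, wandering spaces, maximality -/

universe u

/-- A subspace is reducing for a family of operators if it is invariant under all of them
and all their adjoints. -/
def Reduces (Q : V → H →L[ℂ] H) (T : E → H →L[ℂ] H) (M : Submodule ℂ H) : Prop :=
  (∀ w : V, ∀ x ∈ M, Q w x ∈ M ∧ adjoint (Q w) x ∈ M) ∧
  (∀ e : E, ∀ x ∈ M, T e x ∈ M ∧ adjoint (T e) x ∈ M)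

/-- The wandering space `W_v = {x | Q_v x = x, T_e* x = 0 for all e ∈ r⁻¹(v)}`. -/
def wandering (s r : E → V) (Q : V → H →L[ℂ] H) (T : E → H →L[ℂ] H) (v : V) :
    Submodule ℂ H where
  carrier := {x : H | Q v x = x ∧ ∀ e : E, r e = v → adjoint (T e) x = 0}
  add_mem' := by
    intro a b ha hb
    refine ⟨?_, fun e he => ?_⟩
    · rw [map_add, ha.1, hb.1]
    · rw [map_add, ha.2 e he, hb.2 e he, add_zero]
  zero_mem' := ⟨map_zero _, fun e _ => map_zero _⟩
  smul_mem' := by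
    intro c x hx
    refine ⟨?_, fun e he => ?_⟩
    · rw [map_smul, hx.1]
    · rw [map_smul, hx.2 e he, smul_zero]

/-- The restriction of a TCK family to a reducing subspace `M` is a full Cuntz-Krieger
family (expressed via the action on vectors of `M` in the ambient space). -/
def IsFullCKOn (s r : E → V) (Q : V → H →L[ℂ] H) (T : E → H →L[ℂ] H)
    (M : Submodule ℂ H) : Prop :=
  ∀ v : V, (∃ e, r e = v) → ∀ x ∈ M,
    HasSum (fun e : {e : E // r e = v} => T e.1 (adjoint (T e.1) x)) (Q v x)

/-- A TCK family is maximal if for every TCK family dilating it, the range of the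
dilation isometry is reducing. -/
def IsMaxTCK {V E : Type*} (s r : E → V) {H : Type u} [NormedAddCommGroup H]
    [InnerProductSpace ℂ H] [CompleteSpace H]
    (P : V → H →L[ℂ] H) (S : E → H →L[ℂ] H) : Prop :=
  ∀ (K : Type u) [NormedAddCommGroup K] [InnerProductSpace ℂ K] [CompleteSpace K],
    ∀ (Q : V → K →L[ℂ] K) (T : E → K →L[ℂ] K) (W : H →L[ℂ] K),
      IsTCK s r Q T → Dilates P S Q T W →
        ∀ (g : V ⊕ E) (x : H),
          gen Q T g (W x) ∈ Set.range W ∧ adjoint (gen Q T g) (W x) ∈ Set.range W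

end GraphPaper

namespace GraphPaper

/-- The closed subspace generated by the vectors `T_λ ζ` over paths `λ` with source `v`. -/
def genSubspace {V E : Type*} {H : Type*} [NormedAddCommGroup H] [InnerProductSpace ℂ H]
    [CompleteSpace H] (s r : E → V) (Q : V → H →L[ℂ] H) (T : E → H →L[ℂ] H)
    (v : V) (ζ : H) : Submodule ℂ H :=
  (Submodule.span ℂ (Set.range fun p : SPath s r v => pathOp Q T p.1 ζ)).topologicalClosure

/-!
Positivity of `Q_v - ∑_{e ∈ F} T_e T_e*` forces `T_e* Q_{r(e)} = T_e*` and `T_e* T_f = 0`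
for `e ≠ f`, so with `T_e* T_e = Q_{s(e)}` the generators act on the vectors `T_λ ζ` exactly as
the model operators act on the `ξ_λ`: `Q_w` keeps or kills `T_λ ζ` according to `r(λ)`, `T_e`
prepends `e` or kills, and, because `ζ` is wandering, `T_e*` deletes a leading `e` or kills.
The last rule makes the `T_λ ζ` orthonormal by induction on the length, and all three rules
make their closed span `M` invariant, so `ξ_λ ↦ T_λ ζ` extends to a unitary onto `M` that
intertwines the two families because it does so on a Hilbert basis.
-/

section Operators

variable {X Y : Type*} [NormedAddCommGroup X] [InnerProductSpace ℂ X] [CompleteSpace X]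
  [NormedAddCommGroup Y] [InnerProductSpace ℂ Y] [CompleteSpace Y]

/-- `⟪(P - A A*) y, y⟫ = -‖A* y‖²` when `P y = 0`. -/
theorem adjoint_apply_eq_zero_of_isPosOp_sub {P A : X →L[ℂ] X}
    (hpos : IsPosOp (P - A ∘L adjoint A)) {y : X} (hy : P y = 0) : adjoint A y = 0 := by
  have h := hpos y
  rw [sub_apply, hy, zero_sub, comp_apply, inner_neg_left, ← adjoint_inner_right,
    neg_nonneg, Complex.le_def] at h
  exact re_inner_self_nonpos (𝕜 := ℂ).mp h.1

theorem comp_eq_self_of_adjoint_comp_self_eq {A : X →L[ℂ] Y} {P : X →L[ℂ] X}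
    (hA : adjoint A ∘L A = P) (hP : P ∘L P = P) : A ∘L P = A := by
  ext x
  have hker : P x - x ∈ (adjoint A ∘L A).ker := by
    rw [hA, LinearMap.mem_ker, coe_coe, map_sub, ← comp_apply, hP, sub_self]
  rw [ker_adjoint_comp_self, LinearMap.mem_ker, coe_coe, map_sub, sub_eq_zero] at hker
  exact hker

end Operators

namespace IsTCK

variable {V E : Type*} {H : Type*} [NormedAddCommGroup H] [InnerProductSpace ℂ H]
  [CompleteSpace H] {s r : E → V} {Q : V → H →L[ℂ] H} {T : E → H →L[ℂ] H}

theorem Q_comp_Q (h : IsTCK s r Q T) (v w : V) : Q w ∘L Q v = if v = w then Q v else 0 := by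
  split_ifs with hvw
  · subst hvw; exact h.2.1 v
  · exact h.2.2.1 w v (Ne.symm hvw)

theorem T_comp_Q_source (h : IsTCK s r Q T) (e : E) : T e ∘L Q (s e) = T e :=
  comp_eq_self_of_adjoint_comp_self_eq (h.2.2.2.1 e) (h.2.1 _)

theorem adjoint_T_comp_Q_range (h : IsTCK s r Q T) (e : E) :
    adjoint (T e) ∘L Q (r e) = adjoint (T e) := by
  have hpos : IsPosOp (Q (r e) - T e ∘L adjoint (T e)) := by
    simpa using h.2.2.2.2 (r e) {e} (by simp)
  ext x
  have hy : Q (r e) (x - Q (r e) x) = 0 := by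
    rw [map_sub, ← comp_apply, h.2.1, sub_self]
  have := adjoint_apply_eq_zero_of_isPosOp_sub hpos hy
  rw [map_sub, sub_eq_zero] at this
  exact this.symm

theorem Q_range_comp_T (h : IsTCK s r Q T) (e : E) : Q (r e) ∘L T e = T e := by
  simpa [h.1 (r e)] using congrArg adjoint (h.adjoint_T_comp_Q_range e)

theorem Q_comp_T (h : IsTCK s r Q T) (w : V) (e : E) :
    Q w ∘L T e = if r e = w then T e else 0 := by
  split_ifs with hw
  · subst hw; exact h.Q_range_comp_T e
  · rw [← h.Q_range_comp_T e, ← comp_assoc, h.Q_comp_Q, if_neg hw, zero_comp]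

theorem adjoint_T_comp_T (h : IsTCK s r Q T) (e f : E) :
    adjoint (T e) ∘L T f = if e = f then Q (s e) else 0 := by
  split_ifs with hef
  · subst hef; exact h.2.2.2.1 e
  by_cases hr : r e = r f
  · have hpos : IsPosOp ((Q (r f) - T f ∘L adjoint (T f)) - T e ∘L adjoint (T e)) := by
      have := h.2.2.2.2 (r f) {e, f} (by simp [hr])
      rwa [Finset.sum_pair hef, sub_add_eq_sub_sub_swap] at this
    ext x
    rw [comp_apply, zero_apply]
    refine adjoint_apply_eq_zero_of_isPosOp_sub hpos ?_
    rw [sub_apply, ← comp_apply (Q _), h.Q_range_comp_T, comp_apply, ← comp_apply (adjoint _),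
      h.2.2.2.1, ← comp_apply (T f), h.T_comp_Q_source, sub_self]
  · rw [← h.adjoint_T_comp_Q_range e, ← h.Q_range_comp_T f, comp_assoc, ← comp_assoc (Q _),
      h.Q_comp_Q, if_neg (Ne.symm hr), zero_comp, comp_zero]

theorem adjoint_T_apply_eq_zero_of_mem_wandering (h : IsTCK s r Q T) {v : V} {ζ : H}
    (hζ : ζ ∈ wandering s r Q T v) (e : E) : adjoint (T e) ζ = 0 := by
  by_cases hre : r e = v
  · exact hζ.2 e hre
  · rw [← hζ.1, ← comp_apply, ← h.adjoint_T_comp_Q_range e, comp_assoc, h.Q_comp_Q,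
      if_neg (Ne.symm hre), comp_zero, zero_apply]

end IsTCK

namespace GPath

variable {V E : Type*} {s r : E → V} {p q : GPath s r} {e : E}

def cons (e : E) (p : GPath s r) (h : s e = p.rng) : GPath s r where
  src := p.src
  edges := e :: p.edges
  chain := List.isChain_cons.mpr ⟨fun b hb => h.trans (by simp_all [rng]), p.chain⟩
  src_eq := by
    intro f hf
    rcases hp : p.edges with - | ⟨a, t⟩
    · simp_all [rng]
    · rw [hp, List.getLast?_cons_cons, ← hp] at hf
      exact p.src_eq f hf

theorem tail_cons (h : s e = p.rng) : (p.cons e h).tail = p := ext' rfl rfl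

theorem rng_of_edges_eq_nil (h : p.edges = []) : p.rng = p.src := by simp [rng, h]

theorem rng_of_head?_eq (h : p.edges.head? = some e) : p.rng = r e := by simp [rng, h]

theorem edges_eq_cons_tail (h : p.edges.head? = some e) : p.edges = e :: p.tail.edges := by
  obtain ⟨t, ht⟩ := List.head?_eq_some_iff.mp h
  simp [tail, ht]

theorem s_eq_rng_tail (h : p.edges.head? = some e) : s e = p.tail.rng := by
  have hp := edges_eq_cons_tail h
  rcases ht : p.tail.edges with - | ⟨g, t⟩
  · rw [rng_of_edges_eq_nil ht]
    exact p.src_eq e (by simp [hp, ht])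
  · have hc := p.chain
    rw [hp, ht] at hc
    rw [rng_of_head?_eq (e := g) (by simp [ht])]
    exact (List.isChain_cons_cons.mp hc).1

theorem cons_tail (h : p.edges.head? = some e) : p.tail.cons e (s_eq_rng_tail h) = p :=
  ext' rfl (edges_eq_cons_tail h).symm

theorem eq_iff_of_head?_eq (hq : q.edges.head? = some e) :
    p = q ↔ p.edges.head? = some e ∧ p.tail = q.tail := by
  refine ⟨by rintro rfl; exact ⟨hq, rfl⟩, fun ⟨hp, ht⟩ => ?_⟩
  refine ext' (show p.tail.src = q.tail.src from congrArg GPath.src ht) ?_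
  rw [edges_eq_cons_tail hp, edges_eq_cons_tail hq, ht]

end GPath

section PathOperators

variable {V E : Type*} {H : Type*} [NormedAddCommGroup H] [InnerProductSpace ℂ H]
  {s r : E → V} {Q : V → H →L[ℂ] H} {T : E → H →L[ℂ] H} {p : GPath s r} {e f : E}

theorem pathOp_of_edges_eq_nil (h : p.edges = []) : pathOp Q T p = Q p.src := by
  simp [pathOp, h]

variable [CompleteSpace H]

theorem pathOp_cons (hQT : IsTCK s r Q T) (h : s e = p.rng) :
    pathOp Q T (p.cons e h) = T e ∘L pathOp Q T p := by
  rcases hp : p.edges with - | ⟨a, t⟩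
  · rw [pathOp_of_edges_eq_nil hp, ← GPath.rng_of_edges_eq_nil hp, ← h,
      hQT.T_comp_Q_source]
    simp [pathOp, GPath.cons, hp]
  · simp only [pathOp, GPath.cons, hp, List.isEmpty_cons, Bool.false_eq_true, ↓reduceIte,
      List.map_cons, List.prod_cons]
    rfl

theorem pathOp_of_head?_eq (hQT : IsTCK s r Q T) (h : p.edges.head? = some e) :
    pathOp Q T p = T e ∘L pathOp Q T p.tail := by
  have := pathOp_cons hQT (GPath.s_eq_rng_tail h) (Q := Q) (T := T)
  rwa [GPath.cons_tail h] at this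

theorem Q_comp_pathOp (hQT : IsTCK s r Q T) (w : V) (p : GPath s r) :
    Q w ∘L pathOp Q T p = if p.rng = w then pathOp Q T p else 0 := by
  rcases hp : p.edges.head? with - | e
  · have hnil := List.head?_eq_none_iff.mp hp
    rw [pathOp_of_edges_eq_nil hnil, GPath.rng_of_edges_eq_nil hnil, hQT.Q_comp_Q]
  · rw [pathOp_of_head?_eq hQT hp, GPath.rng_of_head?_eq hp, ← comp_assoc, hQT.Q_comp_T]
    split_ifs <;> simp

theorem T_comp_pathOp (hQT : IsTCK s r Q T) (e : E) (p : GPath s r) :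
    T e ∘L pathOp Q T p = if h : s e = p.rng then pathOp Q T (p.cons e h) else 0 := by
  split_ifs with h
  · exact (pathOp_cons hQT h).symm
  · rw [← hQT.T_comp_Q_source e, comp_assoc, Q_comp_pathOp hQT, if_neg (Ne.symm h), comp_zero]

theorem Q_pathOp_apply (hQT : IsTCK s r Q T) (w : V) (p : GPath s r) (x : H) :
    Q w (pathOp Q T p x) = if p.rng = w then pathOp Q T p x else 0 := by
  rw [← comp_apply, Q_comp_pathOp hQT]
  split_ifs <;> rfl

theorem T_pathOp_apply (hQT : IsTCK s r Q T) (e : E) (p : GPath s r) (x : H) :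
    T e (pathOp Q T p x) = if h : s e = p.rng then pathOp Q T (p.cons e h) x else 0 := by
  rw [← comp_apply, T_comp_pathOp hQT]
  split_ifs <;> rfl

theorem adjoint_T_comp_pathOp_of_head?_eq (hQT : IsTCK s r Q T) (hp : p.edges.head? = some f)
    (e : E) : adjoint (T e) ∘L pathOp Q T p = if e = f then pathOp Q T p.tail else 0 := by
  rw [pathOp_of_head?_eq hQT hp, ← comp_assoc, hQT.adjoint_T_comp_T]
  split_ifs with hef
  · subst hef
    rw [Q_comp_pathOp hQT, if_pos (GPath.s_eq_rng_tail hp).symm]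
  · exact zero_comp _

end PathOperators

section WanderingVector

variable {V E : Type*} {H : Type*} [NormedAddCommGroup H] [InnerProductSpace ℂ H]
  [CompleteSpace H] {s r : E → V} {Q : V → H →L[ℂ] H} {T : E → H →L[ℂ] H}
  {v : V} {ζ : H}

theorem adjoint_T_pathOp_apply (hQT : IsTCK s r Q T) (hζ : ζ ∈ wandering s r Q T v)
    (p : SPath s r v) (e : E) :
    adjoint (T e) (pathOp Q T p.1 ζ) =
      if p.1.edges.head? = some e then pathOp Q T p.1.tail ζ else 0 := by
  rcases hp : p.1.edges.head? with - | f
  · rw [pathOp_of_edges_eq_nil (List.head?_eq_none_iff.mp hp), p.2, hζ.1,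
      hQT.adjoint_T_apply_eq_zero_of_mem_wandering hζ, if_neg (by simp)]
  · rw [← comp_apply, adjoint_T_comp_pathOp_of_head?_eq hQT hp]
    by_cases hef : e = f
    · simp [hef]
    · simp [hef, Ne.symm hef]

theorem inner_pathOp_apply (hQT : IsTCK s r Q T) (hζ : ζ ∈ wandering s r Q T v)
    (hunit : ‖ζ‖ = 1) (p q : SPath s r v) :
    ⟪pathOp Q T p.1 ζ, pathOp Q T q.1 ζ⟫_ℂ = if p = q then 1 else 0 := by
  induction hq : q.1.edges generalizing p q with
  | nil =>
    rw [pathOp_of_edges_eq_nil hq, q.2, hζ.1]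
    rcases hp : p.1.edges.head? with - | f
    · have hp := List.head?_eq_none_iff.mp hp
      rw [pathOp_of_edges_eq_nil hp, p.2, hζ.1, inner_self_eq_norm_sq_to_K, hunit,
        if_pos (Subtype.ext (GPath.ext' (p.2.trans q.2.symm) (hp.trans hq.symm)))]
      simp
    · rw [pathOp_of_head?_eq hQT hp, comp_apply, ← adjoint_inner_right,
        hQT.adjoint_T_apply_eq_zero_of_mem_wandering hζ, inner_zero_right,
        if_neg (by rintro rfl; simp [hq] at hp)]
  | cons e t ih =>
    have hqe : q.1.edges.head? = some e := by simp [hq]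
    rw [pathOp_of_head?_eq hQT hqe, comp_apply, ← adjoint_inner_left,
      adjoint_T_pathOp_apply hQT hζ]
    simp only [Subtype.ext_iff, GPath.eq_iff_of_head?_eq hqe]
    by_cases hpe : p.1.edges.head? = some e
    · have := ih ⟨p.1.tail, p.2⟩ ⟨q.1.tail, q.2⟩ (by simp [GPath.tail, hq])
      simpa [hpe, Subtype.ext_iff] using this
    · simp [hpe]

end WanderingVector

section ModelFamily

variable {ι κ : Type*} {f : κ → Option ι}
  {hf : ∀ ⦃k k' : κ⦄ ⦃i : ι⦄, f k = some i → f k' = some i → k = k'}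

theorem pullCLM_apply (x : lp (fun _ : ι => ℂ) 2) (k : κ) :
    pullCLM f hf x k = pullFun f x k := rfl

variable [DecidableEq ι]

theorem pullCLM_single_of_eq [DecidableEq κ] {i : ι} {k : κ} (hk : f k = some i) (c : ℂ) :
    pullCLM f hf (lp.single 2 i c) = lp.single 2 k c := by
  ext k'
  rw [pullCLM_apply]
  by_cases hk' : k' = k
  · subst hk'
    simp [pullFun, hk]
  · rcases h : f k' with - | j
    · simp [pullFun, h, hk']
    · have hji : j ≠ i := by rintro rfl; exact hk' (hf h hk)
      simp [pullFun, h, hk', hji]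

theorem pullCLM_single_of_forall_ne {i : ι} (hi : ∀ k, f k ≠ some i) (c : ℂ) :
    pullCLM f hf (lp.single 2 i c) = 0 := by
  ext k
  rw [pullCLM_apply]
  rcases h : f k with - | j
  · simp [pullFun, h]
  · have hji : j ≠ i := by rintro rfl; exact hi k h
    simp [pullFun, h, hji]

variable {V E : Type*} {s r : E → V} {v : V}

theorem modelP_xi (w : V) (p : SPath s r v) :
    modelP s r v w (xi p) = if p.1.rng = w then xi p else 0 := by
  unfold modelP xi
  split_ifs with hw
  · exact pullCLM_single_of_eq (by simp [decodeP, hw]) 1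
  · refine pullCLM_single_of_forall_ne (fun k hk => hw ?_) 1
    unfold decodeP at hk
    split_ifs at hk with hkw
    exact Option.some.inj hk ▸ hkw

theorem modelS_xi (e : E) (p : SPath s r v) :
    modelS s r v e (xi p) =
      if h : s e = p.1.rng then xi (⟨p.1.cons e h, p.2⟩ : SPath s r v) else 0 := by
  unfold modelS xi
  split_ifs with h
  · refine pullCLM_single_of_eq ?_ 1
    exact (if_pos rfl).trans (congrArg some (Subtype.ext (GPath.tail_cons h)))
  · refine pullCLM_single_of_forall_ne (fun k hk => h ?_) 1
    unfold decodeS at hk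
    split_ifs at hk with hke
    rw [GPath.s_eq_rng_tail hke, ← Subtype.ext_iff.mp (Option.some.inj hk)]

theorem ext_xi {F : Type*} [NormedAddCommGroup F] [NormedSpace ℂ F]
    {A B : HGv s r v →L[ℂ] F} (h : ∀ p : SPath s r v, A (xi p) = B (xi p)) : A = B :=
  lp.ext_continuousLinearMap (by norm_num) fun p => ContinuousLinearMap.ext_ring (h p)

theorem intertwining_of_xi {H : Type*} [NormedAddCommGroup H] [InnerProductSpace ℂ H]
    {N : Submodule ℂ H} (U : HGv s r v ≃ₗᵢ[ℂ] N) {A : HGv s r v →L[ℂ] HGv s r v}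
    {B : H →L[ℂ] H}
    (h : ∀ p, (U (A (xi p)) : H) = B (U (xi p))) (x : HGv s r v) :
    (U (A x) : H) = B (U x) := by
  have := ext_xi (A := N.subtypeL ∘L (U : HGv s r v →L[ℂ] N) ∘L A)
    (B := B ∘L N.subtypeL ∘L (U : HGv s r v →L[ℂ] N)) h
  exact congrArg (· x) this

end ModelFamily

section ClosedSpan

variable {R M : Type*} [Semiring R] [AddCommMonoid M] [Module R M] [TopologicalSpace M]
  [ContinuousAdd M] [ContinuousConstSMul R M]

theorem apply_mem_topologicalClosure_span {S : Set M} (g : M →L[R] M)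
    (hg : ∀ x ∈ S, g x ∈ (Submodule.span R S).topologicalClosure) {x : M}
    (hx : x ∈ (Submodule.span R S).topologicalClosure) :
    g x ∈ (Submodule.span R S).topologicalClosure :=
  Submodule.topologicalClosure_minimal _
    (Submodule.span_le.mpr fun y hy => hg y hy :
      _ ≤ (Submodule.span R S).topologicalClosure.comap (g : M →ₗ[R] M))
    ((Submodule.isClosed_topologicalClosure _).preimage g.continuous) hx

end ClosedSpan

theorem top_le_topologicalClosure_span_range_restrict {𝕜 M ι : Type*} [NormedField 𝕜]
    [NormedAddCommGroup M] [NormedSpace 𝕜 M] (u : ι → M) :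
    ⊤ ≤ (Submodule.span 𝕜 (Set.range fun i =>
      (⟨u i, Submodule.le_topologicalClosure _ (Submodule.subset_span ⟨i, rfl⟩)⟩ :
        (Submodule.span 𝕜 (Set.range u)).topologicalClosure))).topologicalClosure := by
  rintro x -
  rw [← SetLike.mem_coe, Submodule.topologicalClosure_coe, closure_subtype,
    ← Submodule.coe_subtype, ← Submodule.map_coe, Submodule.map_span, ← Set.range_comp]
  exact x.2

section GeneratedSubspace

variable {V E : Type*} {H : Type*} [NormedAddCommGroup H] [InnerProductSpace ℂ H]
  [CompleteSpace H] {s r : E → V} {Q : V → H →L[ℂ] H} {T : E → H →L[ℂ] H}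
  {v : V} {ζ : H}

theorem pathOp_mem_genSubspace (p : SPath s r v) :
    pathOp Q T p.1 ζ ∈ genSubspace s r Q T v ζ :=
  Submodule.le_topologicalClosure _ (Submodule.subset_span ⟨p, rfl⟩)

theorem apply_mem_genSubspace {g : H →L[ℂ] H}
    (hg : ∀ p : SPath s r v, g (pathOp Q T p.1 ζ) ∈ genSubspace s r Q T v ζ) {x : H}
    (hx : x ∈ genSubspace s r Q T v ζ) : g x ∈ genSubspace s r Q T v ζ :=
  apply_mem_topologicalClosure_span g (by rintro _ ⟨p, rfl⟩; exact hg p) hx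

theorem reduces_genSubspace (hQT : IsTCK s r Q T) (hζ : ζ ∈ wandering s r Q T v) :
    Reduces Q T (genSubspace s r Q T v ζ) := by
  have hQ (w : V) {x : H} (hx : x ∈ genSubspace s r Q T v ζ) :
      Q w x ∈ genSubspace s r Q T v ζ := by
    refine apply_mem_genSubspace (fun p => ?_) hx
    rw [Q_pathOp_apply hQT]
    split_ifs
    exacts [pathOp_mem_genSubspace p, zero_mem _]
  refine ⟨fun w x hx => ⟨hQ w hx, (hQT.1 w).symm ▸ hQ w hx⟩,
    fun e x hx =>
      ⟨apply_mem_genSubspace (fun p => ?_) hx, apply_mem_genSubspace (fun p => ?_) hx⟩⟩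
  · rw [T_pathOp_apply hQT]
    split_ifs with h
    exacts [pathOp_mem_genSubspace ⟨p.1.cons e h, p.2⟩, zero_mem _]
  · rw [adjoint_T_pathOp_apply hQT hζ]
    split_ifs
    exacts [pathOp_mem_genSubspace ⟨p.1.tail, p.2⟩, zero_mem _]

instance : CompleteSpace (genSubspace s r Q T v ζ) :=
  Submodule.topologicalClosure.completeSpace _

def pathBasis (hQT : IsTCK s r Q T) (hζ : ζ ∈ wandering s r Q T v) (hunit : ‖ζ‖ = 1) :
    HilbertBasis (SPath s r v) ℂ (genSubspace s r Q T v ζ) :=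
  HilbertBasis.mk (v := fun p => ⟨pathOp Q T p.1 ζ, pathOp_mem_genSubspace p⟩)
    (orthonormal_iff_ite.mpr fun p q => by
      rw [Submodule.coe_inner]
      exact inner_pathOp_apply hQT hζ hunit p q)
    (top_le_topologicalClosure_span_range_restrict _)

theorem pathBasis_repr_symm_xi (hQT : IsTCK s r Q T) (hζ : ζ ∈ wandering s r Q T v)
    (hunit : ‖ζ‖ = 1) (p : SPath s r v) :
    ((pathBasis hQT hζ hunit).repr.symm (xi p) : H) = pathOp Q T p.1 ζ := by
  rw [xi, HilbertBasis.repr_symm_single]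
  exact congrArg Subtype.val (congrFun (HilbertBasis.coe_mk _ _) p)

end GeneratedSubspace

theorem statement_6_general {V E : Type*}
    {H : Type*} [NormedAddCommGroup H] [InnerProductSpace ℂ H] [CompleteSpace H]
    (s r : E → V) (Q : V → H →L[ℂ] H) (T : E → H →L[ℂ] H) (hQT : IsTCK s r Q T)
    (v : V) (ζ : H) (hunit : ‖ζ‖ = 1)
    (hζ1 : Q v ζ = ζ) (hζ2 : ∀ e : E, r e = v → ContinuousLinearMap.adjoint (T e) ζ = 0) :
    (∀ w : V, ∀ x ∈ genSubspace s r Q T v ζ, Q w x ∈ genSubspace s r Q T v ζ ∧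
        ContinuousLinearMap.adjoint (Q w) x ∈ genSubspace s r Q T v ζ) ∧
    (∀ e : E, ∀ x ∈ genSubspace s r Q T v ζ, T e x ∈ genSubspace s r Q T v ζ ∧
        ContinuousLinearMap.adjoint (T e) x ∈ genSubspace s r Q T v ζ) ∧
    ∃ U : HGv s r v ≃ₗᵢ[ℂ] ↥(genSubspace s r Q T v ζ),
      (∀ p : SPath s r v, (U (xi p) : H) = pathOp Q T p.1 ζ) ∧
      (∀ (w : V) (x : HGv s r v), (U (modelP s r v w x) : H) = Q w ((U x : H))) ∧
      (∀ (e : E) (x : HGv s r v), (U (modelS s r v e x) : H) = T e ((U x : H))) := by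
  have hζ : ζ ∈ wandering s r Q T v := ⟨hζ1, hζ2⟩
  have hU := pathBasis_repr_symm_xi hQT hζ hunit
  refine ⟨(reduces_genSubspace hQT hζ).1, (reduces_genSubspace hQT hζ).2,
    (pathBasis hQT hζ hunit).repr.symm, hU, fun w => intertwining_of_xi _ fun p => ?_,
    fun e => intertwining_of_xi _ fun p => ?_⟩
  · rw [modelP_xi, hU, Q_pathOp_apply hQT]
    split_ifs <;> simp [hU]
  · rw [modelS_xi, hU, T_pathOp_apply hQT]
    split_ifs <;> simp [hU]

/-- If `ζ` is a unit wandering vector at `v` for a TCK family `(Q, T)`,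
then the closed linear span `M` of `{T_λ ζ}` is reducing, and there is a unitary
`U : H_{G,v} → M` sending `ξ_λ` to `T_λ ζ` and intertwining the model family with the
restriction of `(Q, T)` to `M`. -/
theorem statement_6 {V E : Type*} [Countable V] [Countable E]
    {H : Type*} [NormedAddCommGroup H] [InnerProductSpace ℂ H] [CompleteSpace H]
    (s r : E → V) (Q : V → H →L[ℂ] H) (T : E → H →L[ℂ] H) (hQT : IsTCK s r Q T)
    (v : V) (ζ : H) (hunit : ‖ζ‖ = 1)
    (hζ1 : Q v ζ = ζ) (hζ2 : ∀ e : E, r e = v → ContinuousLinearMap.adjoint (T e) ζ = 0) :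
    (∀ w : V, ∀ x ∈ genSubspace s r Q T v ζ, Q w x ∈ genSubspace s r Q T v ζ ∧
        ContinuousLinearMap.adjoint (Q w) x ∈ genSubspace s r Q T v ζ) ∧
    (∀ e : E, ∀ x ∈ genSubspace s r Q T v ζ, T e x ∈ genSubspace s r Q T v ζ ∧
        ContinuousLinearMap.adjoint (T e) x ∈ genSubspace s r Q T v ζ) ∧
    ∃ U : HGv s r v ≃ₗᵢ[ℂ] ↥(genSubspace s r Q T v ζ),
      (∀ p : SPath s r v, (U (xi p) : H) = pathOp Q T p.1 ζ) ∧
      (∀ (w : V) (x : HGv s r v), (U (modelP s r v w x) : H) = Q w ((U x : H))) ∧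
      (∀ (e : E) (x : HGv s r v), (U (modelS s r v e x) : H) = T e ((U x : H))) :=
  statement_6_general s r Q T hQT v ζ hunit hζ1 hζ2

end GraphPaper
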